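/- For a Hermitian matrix u with trace zero, the curve t ↦ exp(tu) satisfies d_H(exp(su), exp(tu)) = |t - s|·(λ_max(u) - λ_min(u)), where d_H is the Hilbert pseudo-metric on positive definite matrices. -/

import Mathlib

open scoped ComplexOrder

/-- `Mmat A B = inf {t > 0 : t • B - A` positive definite `}`. -/
noncomputable def Mmat {n : ℕ} (A B : Matrix (Fin n) (Fin n) ℂ) : ℝ :=
  sInf {t : ℝ | 0 < t ∧ (t • B - A).PosDef}

/-- The Hilbert pseudo-metric `d_H(A,B) = log (M(A,B) · M(B,A))`. -/
noncomputable def dHilbert {n : ℕ} (A B : Matrix (Fin n) (Fin n) ℂ) : ℝ :=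
  Real.log (Mmat A B * Mmat B A)

/-!
Diagonalise `u = U diag(λ) U*`. Then `exp (a u) = U diag(exp (a λ)) U*`, and since `Mmat` is
invariant under unitary conjugation, `Mmat (exp (a u)) (exp (b u))` is the `Mmat` of two positive
diagonal matrices, which is the largest ratio of their entries, `exp (⨆ i, (a - b) λ i)`.
Adding the two exponents `⨆ (s - t) λ` and `⨆ (t - s) λ` gives `|t - s| (λ_max - λ_min)`.
-/

open Matrix

lemma Mmat_unitary_conj {n : ℕ} {U : Matrix (Fin n) (Fin n) ℂ} (hU : U ∈ unitaryGroup (Fin n) ℂ)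
    (A B : Matrix (Fin n) (Fin n) ℂ) :
    Mmat (U * A * star U) (U * B * star U) = Mmat A B := by
  have hUunit : IsUnit U := Unitary.isUnit_coe (U := ⟨U, hU⟩)
  have hconj : ∀ r : ℝ, r • (U * B * star U) - U * A * star U = U * (r • B - A) * star U := by
    intro r
    rw [mul_sub, sub_mul, mul_smul_comm, smul_mul_assoc]
  simp only [Mmat, hconj, hUunit.posDef_star_right_conjugate_iff]

lemma Mmat_diagonal {n : ℕ} [Nonempty (Fin n)] {d e : Fin n → ℝ} (hd : ∀ i, 0 < d i)
    (he : ∀ i, 0 < e i) :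
    Mmat (diagonal fun i => (d i : ℂ)) (diagonal fun i => (e i : ℂ)) = ⨆ i, d i / e i := by
  obtain ⟨j, hj⟩ := Finite.exists_max fun i => d i / e i
  have hsup : (⨆ i, d i / e i) = d j / e j :=
    ciSup_eq_of_forall_le_of_forall_lt_exists_gt hj fun _ hw => ⟨j, hw⟩
  have hdiff : ∀ r : ℝ, r • (diagonal fun i => (e i : ℂ)) - diagonal (fun i => (d i : ℂ)) =
      diagonal fun i => ((r * e i - d i : ℝ) : ℂ) := by
    intro r
    rw [← diagonal_smul, diagonal_sub]
    congr 1
    ext i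
    simp [Complex.real_smul]
  have hset : {r : ℝ | 0 < r ∧ (r • (diagonal fun i => (e i : ℂ)) -
      diagonal fun i => (d i : ℂ)).PosDef} = Set.Ioi (d j / e j) := by
    ext r
    have hratio : ∀ i, 0 < r * e i - d i ↔ d i / e i < r := fun i => by
      rw [sub_pos, div_lt_iff₀ (he i), mul_comm]
    simp only [Set.mem_ofPred_eq, Set.mem_Ioi, hdiff, posDef_diagonal_iff, Complex.zero_lt_real,
      hratio]
    exact ⟨fun h => h.2 j, fun h =>
      ⟨(div_pos (hd j) (he j)).trans h, fun i => (hj i).trans_lt h⟩⟩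
  rw [Mmat, hset, csInf_Ioi, hsup]

lemma exp_smul_eq_conj_diagonal {n : ℕ} {u : Matrix (Fin n) (Fin n) ℂ} (hu : u.IsHermitian)
    (a : ℝ) :
    NormedSpace.exp (a • u) =
      (hu.eigenvectorUnitary : Matrix (Fin n) (Fin n) ℂ) *
        diagonal (fun i => (Real.exp (a * hu.eigenvalues i) : ℂ)) *
        star (hu.eigenvectorUnitary : Matrix (Fin n) (Fin n) ℂ) := by
  set U : Matrix (Fin n) (Fin n) ℂ := (hu.eigenvectorUnitary : Matrix (Fin n) (Fin n) ℂ)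
  have hUunit : IsUnit U := Unitary.isUnit_coe
  have hUinv : U⁻¹ = star U :=
    inv_eq_left_inv (mem_unitaryGroup_iff'.mp hu.eigenvectorUnitary.2)
  have hsmul : a • u = U * diagonal (fun i => ((a * hu.eigenvalues i : ℝ) : ℂ)) * U⁻¹ := by
    conv_lhs => rw [hu.spectral_theorem, Unitary.conjStarAlgAut_apply]
    rw [hUinv, ← smul_mul_assoc, ← mul_smul_comm, ← diagonal_smul]
    congr 3
    ext i
    simp [Complex.real_smul]
  have hexp : NormedSpace.exp (fun i => ((a * hu.eigenvalues i : ℝ) : ℂ)) =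
      fun i => (Real.exp (a * hu.eigenvalues i) : ℂ) := by
    funext i
    rw [Pi.coe_exp, ← Complex.exp_eq_exp_ℂ, Complex.ofReal_exp]
  rw [hsmul, exp_conj U _ hUunit, hUinv, exp_diagonal, hexp]

lemma Mmat_exp_smul {n : ℕ} [Nonempty (Fin n)] {u : Matrix (Fin n) (Fin n) ℂ}
    (hu : u.IsHermitian) (a b : ℝ) :
    Mmat (NormedSpace.exp (a • u)) (NormedSpace.exp (b • u)) =
      Real.exp (⨆ i, (a - b) * hu.eigenvalues i) := by
  rw [exp_smul_eq_conj_diagonal hu, exp_smul_eq_conj_diagonal hu,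
    Mmat_unitary_conj hu.eigenvectorUnitary.2, Mmat_diagonal (fun _ => Real.exp_pos _)
      (fun _ => Real.exp_pos _)]
  simp only [← Real.exp_sub, ← sub_mul]
  exact (Real.exp_monotone.map_ciSup_of_continuousAt Real.continuous_exp.continuousAt
    (Set.finite_range _).bddAbove).symm

lemma Real.iSup_neg_mul_add_iSup_mul {ι : Sort*} (f : ι → ℝ) (c : ℝ) :
    (⨆ i, -c * f i) + ⨆ i, c * f i = |c| * ((⨆ i, f i) - ⨅ i, f i) := by
  rcases le_total 0 c with hc | hc
  · rw [← Real.mul_iInf_of_nonpos (neg_nonpos.mpr hc), ← Real.mul_iSup_of_nonneg hc,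
      abs_of_nonneg hc]
    ring
  · rw [← Real.mul_iSup_of_nonneg (neg_nonneg.mpr hc), ← Real.mul_iInf_of_nonpos hc,
      abs_of_nonpos hc]
    ring

theorem dHilbert_exp_geodesic_general {n : ℕ} (hn : 0 < n)
    (u : Matrix (Fin n) (Fin n) ℂ) (hu : u.IsHermitian)
    (s t : ℝ) :
    dHilbert (NormedSpace.exp (s • u)) (NormedSpace.exp (t • u)) =
      |t - s| * ((⨆ i, hu.eigenvalues i) - ⨅ i, hu.eigenvalues i) := by
  have : Nonempty (Fin n) := ⟨⟨0, hn⟩⟩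
  rw [dHilbert, Mmat_exp_smul hu, Mmat_exp_smul hu, ← Real.exp_add, Real.log_exp, ← neg_sub t s]
  exact Real.iSup_neg_mul_add_iSup_mul _ _

/-- For a trace-zero Hermitian matrix `u`, the curve `t ↦ exp (t u)` satisfies
`d_H(exp (s u), exp (t u)) = |t - s| * (λ_max u - λ_min u)` for the Hilbert
pseudo-metric on positive definite matrices. -/
theorem dHilbert_exp_geodesic {n : ℕ} (hn : 0 < n)
    (u : Matrix (Fin n) (Fin n) ℂ) (hu : u.IsHermitian) (htr : u.trace = 0)
    (s t : ℝ) :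
    dHilbert (NormedSpace.exp (s • u)) (NormedSpace.exp (t • u)) =
      |t - s| * ((⨆ i, hu.eigenvalues i) - ⨅ i, hu.eigenvalues i) :=
  dHilbert_exp_geodesic_general hn u hu s t
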